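/- If Δ is a local super-derivation of the super Schrödinger algebra 𝒮 satisfying Δ(h+z) = 0, then there exist complex numbers α, μ₁, μ₂, c, d, λ such that Δ(e) = 2α·e, Δ(f) = −2α·f, Δ(p) = μ₁·p, Δ(q) = μ₂·q, Δ(E) = c·p + α·E, Δ(F) = −c·q − α·F, and Δ(G) = d·z + λ·G. -/
import Mathlib


noncomputable section

/-- Underlying space of the N=1 super Schrödinger algebra: coordinates in the
ordered basis (e, f, h, p, q, z, E, F, G). -/
abbrev SS : Type := Fin 9 → ℂ

def eV : SS := Pi.single 0 1
def fV : SS := Pi.single 1 1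
def hV : SS := Pi.single 2 1
def pV : SS := Pi.single 3 1
def qV : SS := Pi.single 4 1
def zV : SS := Pi.single 5 1
def EV : SS := Pi.single 6 1
def FV : SS := Pi.single 7 1
def GV : SS := Pi.single 8 1

/-- Brackets of basis elements (structure constants), encoding the table
[h,e]=2e, [h,f]=-2f, [e,f]=h, [h,p]=p, [h,q]=-q, [p,q]=z, [e,q]=p, [p,f]=-q,
[h,E]=E, [h,F]=-F, [e,F]=-E, [f,E]=-F, [p,F]=G, [q,E]=G, [E,E]=2e, [F,F]=-2f,
[G,G]=z, [E,F]=-h, [E,G]=-p, [F,G]=q, extended by graded skew-symmetry. -/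
def brkB (i j : Fin 9) : SS :=
  match i.val, j.val with
  | 0, 1 => hV
  | 0, 4 => pV
  | 0, 7 => -EV
  | 1, 0 => -hV
  | 1, 2 => (2:ℂ) • fV
  | 1, 3 => qV
  | 1, 6 => -FV
  | 2, 0 => (2:ℂ) • eV
  | 2, 1 => (-2:ℂ) • fV
  | 2, 3 => pV
  | 2, 4 => -qV
  | 2, 6 => EV
  | 2, 7 => -FV
  | 3, 1 => -qV
  | 3, 2 => -pV
  | 3, 4 => zV
  | 3, 7 => GV
  | 4, 0 => -pV
  | 4, 2 => qV
  | 4, 3 => -zV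
  | 4, 6 => GV
  | 6, 1 => FV
  | 6, 2 => -EV
  | 6, 4 => -GV
  | 6, 6 => (2:ℂ) • eV
  | 6, 7 => -hV
  | 6, 8 => -pV
  | 7, 0 => EV
  | 7, 2 => FV
  | 7, 3 => -GV
  | 7, 6 => -hV
  | 7, 7 => (-2:ℂ) • fV
  | 7, 8 => qV
  | 8, 6 => -pV
  | 8, 7 => qV
  | 8, 8 => zV
  | _, _ => 0

/-- The bilinear bracket of the super Schrödinger algebra. -/
def brk (x y : SS) : SS :=
  ∑ i : Fin 9, ∑ j : Fin 9, (x i * y j) • brkB i j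

/-- The even part 𝒮₀ = span_ℂ{e, f, h, p, q, z}. -/
def S0 : Submodule ℂ SS := Submodule.span ℂ {eV, fV, hV, pV, qV, zV}

/-- The odd part 𝒮₁ = span_ℂ{E, F, G}. -/
def S1 : Submodule ℂ SS := Submodule.span ℂ {EV, FV, GV}

/-- `D` is a super-derivation of degree 0̄. -/
def IsSuperDer0 (D : SS → SS) : Prop :=
  IsLinearMap ℂ D ∧
  (∀ x ∈ S0, D x ∈ S0) ∧ (∀ x ∈ S1, D x ∈ S1) ∧
  (∀ x y : SS, (x ∈ S0 ∨ x ∈ S1) → (y ∈ S0 ∨ y ∈ S1) →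
    D (brk x y) = brk (D x) y + brk x (D y))

/-- `D` is a super-derivation of degree 1̄. -/
def IsSuperDer1 (D : SS → SS) : Prop :=
  IsLinearMap ℂ D ∧
  (∀ x ∈ S0, D x ∈ S1) ∧ (∀ x ∈ S1, D x ∈ S0) ∧
  (∀ x y : SS, x ∈ S0 → (y ∈ S0 ∨ y ∈ S1) →
    D (brk x y) = brk (D x) y + brk x (D y)) ∧
  (∀ x y : SS, x ∈ S1 → (y ∈ S0 ∨ y ∈ S1) →
    D (brk x y) = brk (D x) y - brk x (D y))

/-- `D` is a super-derivation: a sum of super-derivations of degrees 0̄ and 1̄. -/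
def IsSuperDer (D : SS → SS) : Prop :=
  ∃ D0 D1 : SS → SS, IsSuperDer0 D0 ∧ IsSuperDer1 D1 ∧ ∀ x, D x = D0 x + D1 x

/-- `Δ` is a local super-derivation: a linear map such that for every `x` there is a
super-derivation `D` (depending on `x`) with `Δ x = D x`. -/
def IsLocalSuperDer (Δ : SS → SS) : Prop :=
  IsLinearMap ℂ Δ ∧ ∀ x : SS, ∃ D : SS → SS, IsSuperDer D ∧ Δ x = D x

/-- The even linear map δ with δ(e)=δ(f)=δ(h)=δ(E)=δ(F)=0, δ(p)=p, δ(q)=q,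
δ(z)=2z, δ(G)=G. -/
def deltaMap (x : SS) : SS :=
  x 3 • pV + x 4 • qV + (2 * x 5) • zV + x 8 • GV



lemma sum9 {M : Type*} [AddCommMonoid M] (f : Fin 9 → M) :
    ∑ i, f i = f 0 + f 1 + f 2 + f 3 + f 4 + f 5 + f 6 + f 7 + f 8 := by
  rw [Fin.sum_univ_castSucc, Fin.sum_univ_eight]; rfl
@[simp] lemma ceV0 : eV 0 = 1 := rfl
@[simp] lemma ceV1 : eV 1 = 0 := rfl
@[simp] lemma ceV2 : eV 2 = 0 := rfl
@[simp] lemma ceV3 : eV 3 = 0 := rfl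
@[simp] lemma ceV4 : eV 4 = 0 := rfl
@[simp] lemma ceV5 : eV 5 = 0 := rfl
@[simp] lemma ceV6 : eV 6 = 0 := rfl
@[simp] lemma ceV7 : eV 7 = 0 := rfl
@[simp] lemma ceV8 : eV 8 = 0 := rfl
@[simp] lemma cfV0 : fV 0 = 0 := rfl
@[simp] lemma cfV1 : fV 1 = 1 := rfl
@[simp] lemma cfV2 : fV 2 = 0 := rfl
@[simp] lemma cfV3 : fV 3 = 0 := rfl
@[simp] lemma cfV4 : fV 4 = 0 := rfl
@[simp] lemma cfV5 : fV 5 = 0 := rfl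
@[simp] lemma cfV6 : fV 6 = 0 := rfl
@[simp] lemma cfV7 : fV 7 = 0 := rfl
@[simp] lemma cfV8 : fV 8 = 0 := rfl
@[simp] lemma chV0 : hV 0 = 0 := rfl
@[simp] lemma chV1 : hV 1 = 0 := rfl
@[simp] lemma chV2 : hV 2 = 1 := rfl
@[simp] lemma chV3 : hV 3 = 0 := rfl
@[simp] lemma chV4 : hV 4 = 0 := rfl
@[simp] lemma chV5 : hV 5 = 0 := rfl
@[simp] lemma chV6 : hV 6 = 0 := rfl
@[simp] lemma chV7 : hV 7 = 0 := rfl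
@[simp] lemma chV8 : hV 8 = 0 := rfl
@[simp] lemma cpV0 : pV 0 = 0 := rfl
@[simp] lemma cpV1 : pV 1 = 0 := rfl
@[simp] lemma cpV2 : pV 2 = 0 := rfl
@[simp] lemma cpV3 : pV 3 = 1 := rfl
@[simp] lemma cpV4 : pV 4 = 0 := rfl
@[simp] lemma cpV5 : pV 5 = 0 := rfl
@[simp] lemma cpV6 : pV 6 = 0 := rfl
@[simp] lemma cpV7 : pV 7 = 0 := rfl
@[simp] lemma cpV8 : pV 8 = 0 := rfl
@[simp] lemma cqV0 : qV 0 = 0 := rfl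
@[simp] lemma cqV1 : qV 1 = 0 := rfl
@[simp] lemma cqV2 : qV 2 = 0 := rfl
@[simp] lemma cqV3 : qV 3 = 0 := rfl
@[simp] lemma cqV4 : qV 4 = 1 := rfl
@[simp] lemma cqV5 : qV 5 = 0 := rfl
@[simp] lemma cqV6 : qV 6 = 0 := rfl
@[simp] lemma cqV7 : qV 7 = 0 := rfl
@[simp] lemma cqV8 : qV 8 = 0 := rfl
@[simp] lemma czV0 : zV 0 = 0 := rfl
@[simp] lemma czV1 : zV 1 = 0 := rfl
@[simp] lemma czV2 : zV 2 = 0 := rfl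
@[simp] lemma czV3 : zV 3 = 0 := rfl
@[simp] lemma czV4 : zV 4 = 0 := rfl
@[simp] lemma czV5 : zV 5 = 1 := rfl
@[simp] lemma czV6 : zV 6 = 0 := rfl
@[simp] lemma czV7 : zV 7 = 0 := rfl
@[simp] lemma czV8 : zV 8 = 0 := rfl
@[simp] lemma cEV0 : EV 0 = 0 := rfl
@[simp] lemma cEV1 : EV 1 = 0 := rfl
@[simp] lemma cEV2 : EV 2 = 0 := rfl
@[simp] lemma cEV3 : EV 3 = 0 := rfl
@[simp] lemma cEV4 : EV 4 = 0 := rfl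
@[simp] lemma cEV5 : EV 5 = 0 := rfl
@[simp] lemma cEV6 : EV 6 = 1 := rfl
@[simp] lemma cEV7 : EV 7 = 0 := rfl
@[simp] lemma cEV8 : EV 8 = 0 := rfl
@[simp] lemma cFV0 : FV 0 = 0 := rfl
@[simp] lemma cFV1 : FV 1 = 0 := rfl
@[simp] lemma cFV2 : FV 2 = 0 := rfl
@[simp] lemma cFV3 : FV 3 = 0 := rfl
@[simp] lemma cFV4 : FV 4 = 0 := rfl
@[simp] lemma cFV5 : FV 5 = 0 := rfl
@[simp] lemma cFV6 : FV 6 = 0 := rfl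
@[simp] lemma cFV7 : FV 7 = 1 := rfl
@[simp] lemma cFV8 : FV 8 = 0 := rfl
@[simp] lemma cGV0 : GV 0 = 0 := rfl
@[simp] lemma cGV1 : GV 1 = 0 := rfl
@[simp] lemma cGV2 : GV 2 = 0 := rfl
@[simp] lemma cGV3 : GV 3 = 0 := rfl
@[simp] lemma cGV4 : GV 4 = 0 := rfl
@[simp] lemma cGV5 : GV 5 = 0 := rfl
@[simp] lemma cGV6 : GV 6 = 0 := rfl
@[simp] lemma cGV7 : GV 7 = 0 := rfl
@[simp] lemma cGV8 : GV 8 = 1 := rfl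

set_option maxHeartbeats 1000000 in
@[simp] lemma brkc0 (x y : SS) : brk x y 0 = 2*x 2*y 0 + 2*x 6*y 6 := by
  have h : brk x y 0 = ∑ i : Fin 9, ∑ j : Fin 9, (x i * y j) * (brkB i j 0) := by simp [brk]
  rw [h]
  simp only [sum9]
  simp [brkB, eV, fV, hV, pV, qV, zV, EV, FV, GV, Pi.single_apply]
  try ring
set_option maxHeartbeats 1000000 in
@[simp] lemma brkc1 (x y : SS) : brk x y 1 = 2*x 1*y 2 - 2*x 2*y 1 - 2*x 7*y 7 := by
  have h : brk x y 1 = ∑ i : Fin 9, ∑ j : Fin 9, (x i * y j) * (brkB i j 1) := by simp [brk]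
  rw [h]
  simp only [sum9]
  simp [brkB, eV, fV, hV, pV, qV, zV, EV, FV, GV, Pi.single_apply]
  try ring
set_option maxHeartbeats 1000000 in
@[simp] lemma brkc2 (x y : SS) : brk x y 2 = x 0*y 1 - x 1*y 0 - x 6*y 7 - x 7*y 6 := by
  have h : brk x y 2 = ∑ i : Fin 9, ∑ j : Fin 9, (x i * y j) * (brkB i j 2) := by simp [brk]
  rw [h]
  simp only [sum9]
  simp [brkB, eV, fV, hV, pV, qV, zV, EV, FV, GV, Pi.single_apply]
  try ring
set_option maxHeartbeats 1000000 in
@[simp] lemma brkc3 (x y : SS) : brk x y 3 = x 0*y 4 + x 2*y 3 - x 3*y 2 - x 4*y 0 - x 6*y 8 - x 8*y 6 := by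
  have h : brk x y 3 = ∑ i : Fin 9, ∑ j : Fin 9, (x i * y j) * (brkB i j 3) := by simp [brk]
  rw [h]
  simp only [sum9]
  simp [brkB, eV, fV, hV, pV, qV, zV, EV, FV, GV, Pi.single_apply]
  try ring
set_option maxHeartbeats 1000000 in
@[simp] lemma brkc4 (x y : SS) : brk x y 4 = x 1*y 3 - x 2*y 4 - x 3*y 1 + x 4*y 2 + x 7*y 8 + x 8*y 7 := by
  have h : brk x y 4 = ∑ i : Fin 9, ∑ j : Fin 9, (x i * y j) * (brkB i j 4) := by simp [brk]
  rw [h]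
  simp only [sum9]
  simp [brkB, eV, fV, hV, pV, qV, zV, EV, FV, GV, Pi.single_apply]
  try ring
set_option maxHeartbeats 1000000 in
@[simp] lemma brkc5 (x y : SS) : brk x y 5 = x 3*y 4 - x 4*y 3 + x 8*y 8 := by
  have h : brk x y 5 = ∑ i : Fin 9, ∑ j : Fin 9, (x i * y j) * (brkB i j 5) := by simp [brk]
  rw [h]
  simp only [sum9]
  simp [brkB, eV, fV, hV, pV, qV, zV, EV, FV, GV, Pi.single_apply]
  try ring
set_option maxHeartbeats 1000000 in
@[simp] lemma brkc6 (x y : SS) : brk x y 6 = -(x 0*y 7) + x 2*y 6 - x 6*y 2 + x 7*y 0 := by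
  have h : brk x y 6 = ∑ i : Fin 9, ∑ j : Fin 9, (x i * y j) * (brkB i j 6) := by simp [brk]
  rw [h]
  simp only [sum9]
  simp [brkB, eV, fV, hV, pV, qV, zV, EV, FV, GV, Pi.single_apply]
  try ring
set_option maxHeartbeats 1000000 in
@[simp] lemma brkc7 (x y : SS) : brk x y 7 = -(x 1*y 6) - x 2*y 7 + x 6*y 1 + x 7*y 2 := by
  have h : brk x y 7 = ∑ i : Fin 9, ∑ j : Fin 9, (x i * y j) * (brkB i j 7) := by simp [brk]
  rw [h]
  simp only [sum9]
  simp [brkB, eV, fV, hV, pV, qV, zV, EV, FV, GV, Pi.single_apply]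
  try ring
set_option maxHeartbeats 1000000 in
@[simp] lemma brkc8 (x y : SS) : brk x y 8 = x 3*y 7 + x 4*y 6 - x 6*y 4 - x 7*y 3 := by
  have h : brk x y 8 = ∑ i : Fin 9, ∑ j : Fin 9, (x i * y j) * (brkB i j 8) := by simp [brk]
  rw [h]
  simp only [sum9]
  simp [brkB, eV, fV, hV, pV, qV, zV, EV, FV, GV, Pi.single_apply]
  try ring

lemma brk_single (i j : Fin 9) : brk (Pi.single i 1) (Pi.single j 1) = brkB i j := by
  simp only [brk, Pi.single_apply]
  simp [ite_mul, mul_ite, ite_smul]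

lemma bEH : brk eV hV = 0 := brk_single 0 2
lemma bHE : brk hV eV = (2:ℂ) • eV := brk_single 2 0
lemma bHF : brk hV fV = (-2:ℂ) • fV := brk_single 2 1
lemma bEF : brk eV fV = hV := brk_single 0 1
lemma bHP : brk hV pV = pV := brk_single 2 3
lemma bHQ : brk hV qV = -qV := brk_single 2 4
lemma bEE : brk EV EV = (2:ℂ) • eV := brk_single 6 6
lemma bFF : brk FV FV = (-2:ℂ) • fV := brk_single 7 7
lemma bEFm : brk EV FV = -hV := brk_single 6 7
lemma bFG : brk FV GV = qV := brk_single 7 8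
lemma bEG : brk EV GV = -pV := brk_single 6 8
lemma bHEo : brk hV EV = EV := brk_single 2 6
lemma bEHo : brk EV hV = -EV := brk_single 6 2
lemma bHFo : brk hV FV = -FV := brk_single 2 7
lemma bHG : brk hV GV = 0 := brk_single 2 8
lemma bQE : brk qV EV = GV := brk_single 4 6
lemma bEQ : brk eV qV = pV := brk_single 0 4
lemma bPQ : brk pV qV = zV := brk_single 3 4
lemma bGG : brk GV GV = zV := brk_single 8 8

def Ker678 : Submodule ℂ SS where
  carrier := {x | x 6 = 0 ∧ x 7 = 0 ∧ x 8 = 0}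
  add_mem' := by rintro a b ⟨a6,a7,a8⟩ ⟨b6,b7,b8⟩
                 refine ⟨?_,?_,?_⟩ <;> simp [a6,a7,a8,b6,b7,b8]
  zero_mem' := ⟨rfl, rfl, rfl⟩
  smul_mem' := by rintro c a ⟨a6,a7,a8⟩
                  refine ⟨?_,?_,?_⟩ <;> simp [a6,a7,a8]

def Ker05 : Submodule ℂ SS where
  carrier := {x | x 0 = 0 ∧ x 1 = 0 ∧ x 2 = 0 ∧ x 3 = 0 ∧ x 4 = 0 ∧ x 5 = 0}
  add_mem' := by rintro a b ⟨a0,a1,a2,a3,a4,a5⟩ ⟨b0,b1,b2,b3,b4,b5⟩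
                 refine ⟨?_,?_,?_,?_,?_,?_⟩ <;> simp [a0,a1,a2,a3,a4,a5,b0,b1,b2,b3,b4,b5]
  zero_mem' := ⟨rfl, rfl, rfl, rfl, rfl, rfl⟩
  smul_mem' := by rintro c a ⟨a0,a1,a2,a3,a4,a5⟩
                  refine ⟨?_,?_,?_,?_,?_,?_⟩ <;> simp [a0,a1,a2,a3,a4,a5]

lemma memS0_coords {x : SS} (hx : x ∈ S0) : x 6 = 0 ∧ x 7 = 0 ∧ x 8 = 0 := by
  have hle : S0 ≤ Ker678 := by
    rw [S0, Submodule.span_le]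
    rintro y hy
    simp only [Set.mem_insert_iff, Set.mem_singleton_iff] at hy
    rcases hy with rfl|rfl|rfl|rfl|rfl|rfl <;> exact ⟨rfl, rfl, rfl⟩
  exact hle hx

lemma memS1_coords {x : SS} (hx : x ∈ S1) :
    x 0 = 0 ∧ x 1 = 0 ∧ x 2 = 0 ∧ x 3 = 0 ∧ x 4 = 0 ∧ x 5 = 0 := by
  have hle : S1 ≤ Ker05 := by
    rw [S1, Submodule.span_le]
    rintro y hy
    simp only [Set.mem_insert_iff, Set.mem_singleton_iff] at hy
    rcases hy with rfl|rfl|rfl <;> exact ⟨rfl, rfl, rfl, rfl, rfl, rfl⟩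
  exact hle hx

lemma eV_S0 : eV ∈ S0 := Submodule.subset_span (by simp)
lemma fV_S0 : fV ∈ S0 := Submodule.subset_span (by simp)
lemma hV_S0 : hV ∈ S0 := Submodule.subset_span (by simp)
lemma pV_S0 : pV ∈ S0 := Submodule.subset_span (by simp)
lemma qV_S0 : qV ∈ S0 := Submodule.subset_span (by simp)
lemma EV_S1 : EV ∈ S1 := Submodule.subset_span (by simp)
lemma FV_S1 : FV ∈ S1 := Submodule.subset_span (by simp)
lemma GV_S1 : GV ∈ S1 := Submodule.subset_span (by simp)

lemma SS_ext9 {x y : SS} (h0 : x 0 = y 0) (h1 : x 1 = y 1) (h2 : x 2 = y 2)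
    (h3 : x 3 = y 3) (h4 : x 4 = y 4) (h5 : x 5 = y 5) (h6 : x 6 = y 6)
    (h7 : x 7 = y 7) (h8 : x 8 = y 8) : x = y := by
  funext k; fin_cases k
  exacts [h0, h1, h2, h3, h4, h5, h6, h7, h8]

lemma superDer0_vals {D : SS → SS} (hD : IsSuperDer0 D) :
    ∃ lam t : ℂ, D eV = (2*lam) • eV ∧ D fV = (-(2*lam)) • fV ∧
      D pV = (lam + t) • pV ∧ D qV = (t - lam) • qV ∧
      D EV = lam • EV ∧ D FV = (-lam) • FV ∧ D GV = t • GV := by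
  obtain ⟨hlin, hS0, hS1, hL⟩ := hD
  obtain ⟨pe6, pe7, pe8⟩ := memS0_coords (hS0 eV eV_S0)
  obtain ⟨pf6, pf7, pf8⟩ := memS0_coords (hS0 fV fV_S0)
  obtain ⟨pp6, pp7, pp8⟩ := memS0_coords (hS0 pV pV_S0)
  obtain ⟨pq6, pq7, pq8⟩ := memS0_coords (hS0 qV qV_S0)
  obtain ⟨PE0, PE1, PE2, PE3, PE4, PE5⟩ := memS1_coords (hS1 EV EV_S1)
  obtain ⟨PF0, PF1, PF2, PF3, PF4, PF5⟩ := memS1_coords (hS1 FV FV_S1)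
  obtain ⟨PG0, PG1, PG2, PG3, PG4, PG5⟩ := memS1_coords (hS1 GV GV_S1)
  have IA := hL eV hV (Or.inl eV_S0) (Or.inl hV_S0)
  rw [bEH, hlin.map_zero] at IA
  have IB := hL hV eV (Or.inl hV_S0) (Or.inl eV_S0)
  rw [bHE, hlin.map_smul] at IB
  have IC := hL hV fV (Or.inl hV_S0) (Or.inl fV_S0)
  rw [bHF, hlin.map_smul] at IC
  have ID := hL eV fV (Or.inl eV_S0) (Or.inl fV_S0)
  rw [bEF] at ID
  have IE := hL hV pV (Or.inl hV_S0) (Or.inl pV_S0)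
  rw [bHP] at IE
  have IF := hL hV qV (Or.inl hV_S0) (Or.inl qV_S0)
  rw [bHQ, hlin.map_neg] at IF
  have IG := hL EV EV (Or.inr EV_S1) (Or.inr EV_S1)
  rw [bEE, hlin.map_smul] at IG
  have IH := hL FV FV (Or.inr FV_S1) (Or.inr FV_S1)
  rw [bFF, hlin.map_smul] at IH
  have II := hL EV FV (Or.inr EV_S1) (Or.inr FV_S1)
  rw [bEFm, hlin.map_neg] at II
  have IJ := hL FV GV (Or.inr FV_S1) (Or.inr GV_S1)
  rw [bFG] at IJ
  have IK := hL EV GV (Or.inr EV_S1) (Or.inr GV_S1)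
  rw [bEG, hlin.map_neg] at IK
  have A1 : D eV 1 = 0 := by
    have hh := congrFun IA 1
    simp at hh
    first
    | exact hh
    | exact hh.symm
    | linear_combination hh
    | linear_combination -hh
    | linear_combination hh / 2
    | linear_combination -hh / 2
    | linear_combination 2 * hh
    | linear_combination -2 * hh
    | linear_combination hh / 3
    | linear_combination -hh / 3
    | linear_combination hh / 4
    | linear_combination -hh / 4
  have A2 : D hV 1 = 0 := by
    have hh := congrFun IA 2
    simp at hh
    first
    | exact hh
    | exact hh.symm
    | linear_combination hh
    | linear_combination -hh
    | linear_combination hh / 2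
    | linear_combination -hh / 2
    | linear_combination 2 * hh
    | linear_combination -2 * hh
    | linear_combination hh / 3
    | linear_combination -hh / 3
    | linear_combination hh / 4
    | linear_combination -hh / 4
  have A3 : D eV 3 = D hV 4 := by
    have hh := congrFun IA 3
    simp at hh
    first
    | exact hh
    | exact hh.symm
    | linear_combination hh
    | linear_combination -hh
    | linear_combination hh / 2
    | linear_combination -hh / 2
    | linear_combination 2 * hh
    | linear_combination -2 * hh
    | linear_combination hh / 3
    | linear_combination -hh / 3
    | linear_combination hh / 4
    | linear_combination -hh / 4
  have A4 : D eV 4 = 0 := by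
    have hh := congrFun IA 4
    simp at hh
    first
    | exact hh
    | exact hh.symm
    | linear_combination hh
    | linear_combination -hh
    | linear_combination hh / 2
    | linear_combination -hh / 2
    | linear_combination 2 * hh
    | linear_combination -2 * hh
    | linear_combination hh / 3
    | linear_combination -hh / 3
    | linear_combination hh / 4
    | linear_combination -hh / 4
  have B0 : D hV 2 = 0 := by
    have hh := congrFun IB 0
    simp at hh
    first
    | exact hh
    | exact hh.symm
    | linear_combination hh
    | linear_combination -hh
    | linear_combination hh / 2
    | linear_combination -hh / 2
    | linear_combination 2 * hh
    | linear_combination -2 * hh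
    | linear_combination hh / 3
    | linear_combination -hh / 3
    | linear_combination hh / 4
    | linear_combination -hh / 4
  have B2 : 2 * D eV 2 = -(D hV 1) := by
    have hh := congrFun IB 2
    simp at hh
    first
    | exact hh
    | exact hh.symm
    | linear_combination hh
    | linear_combination -hh
    | linear_combination hh / 2
    | linear_combination -hh / 2
    | linear_combination 2 * hh
    | linear_combination -2 * hh
    | linear_combination hh / 3
    | linear_combination -hh / 3
    | linear_combination hh / 4
    | linear_combination -hh / 4
  have B3 : D eV 3 = -(D hV 4) := by
    have hh := congrFun IB 3
    simp at hh
    first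
    | exact hh
    | exact hh.symm
    | linear_combination hh
    | linear_combination -hh
    | linear_combination hh / 2
    | linear_combination -hh / 2
    | linear_combination 2 * hh
    | linear_combination -2 * hh
    | linear_combination hh / 3
    | linear_combination -hh / 3
    | linear_combination hh / 4
    | linear_combination -hh / 4
  have B5 : D eV 5 = 0 := by
    have hh := congrFun IB 5
    simp at hh
    first
    | exact hh
    | exact hh.symm
    | linear_combination hh
    | linear_combination -hh
    | linear_combination hh / 2
    | linear_combination -hh / 2
    | linear_combination 2 * hh
    | linear_combination -2 * hh
    | linear_combination hh / 3
    | linear_combination -hh / 3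
    | linear_combination hh / 4
    | linear_combination -hh / 4
  have C0 : D fV 0 = 0 := by
    have hh := congrFun IC 0
    simp at hh
    first
    | exact hh
    | exact hh.symm
    | linear_combination hh
    | linear_combination -hh
    | linear_combination hh / 2
    | linear_combination -hh / 2
    | linear_combination 2 * hh
    | linear_combination -2 * hh
    | linear_combination hh / 3
    | linear_combination -hh / 3
    | linear_combination hh / 4
    | linear_combination -hh / 4
  have C2 : 2 * D fV 2 = -(D hV 0) := by
    have hh := congrFun IC 2
    simp at hh
    first
    | exact hh
    | exact hh.symm
    | linear_combination hh
    | linear_combination -hh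
    | linear_combination hh / 2
    | linear_combination -hh / 2
    | linear_combination 2 * hh
    | linear_combination -2 * hh
    | linear_combination hh / 3
    | linear_combination -hh / 3
    | linear_combination hh / 4
    | linear_combination -hh / 4
  have C3 : D fV 3 = 0 := by
    have hh := congrFun IC 3
    simp at hh
    first
    | exact hh
    | exact hh.symm
    | linear_combination hh
    | linear_combination -hh
    | linear_combination hh / 2
    | linear_combination -hh / 2
    | linear_combination 2 * hh
    | linear_combination -2 * hh
    | linear_combination hh / 3
    | linear_combination -hh / 3
    | linear_combination hh / 4
    | linear_combination -hh / 4
  have C4 : D fV 4 = D hV 3 := by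
    have hh := congrFun IC 4
    simp at hh
    first
    | exact hh
    | exact hh.symm
    | linear_combination hh
    | linear_combination -hh
    | linear_combination hh / 2
    | linear_combination -hh / 2
    | linear_combination 2 * hh
    | linear_combination -2 * hh
    | linear_combination hh / 3
    | linear_combination -hh / 3
    | linear_combination hh / 4
    | linear_combination -hh / 4
  have C5 : D fV 5 = 0 := by
    have hh := congrFun IC 5
    simp at hh
    first
    | exact hh
    | exact hh.symm
    | linear_combination hh
    | linear_combination -hh
    | linear_combination hh / 2
    | linear_combination -hh / 2
    | linear_combination 2 * hh
    | linear_combination -2 * hh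
    | linear_combination hh / 3
    | linear_combination -hh / 3
    | linear_combination hh / 4
    | linear_combination -hh / 4
  have D0f : D hV 0 = 0 := by
    have hh := congrFun ID 0
    simp at hh
    first
    | exact hh
    | exact hh.symm
    | linear_combination hh
    | linear_combination -hh
    | linear_combination hh / 2
    | linear_combination -hh / 2
    | linear_combination 2 * hh
    | linear_combination -2 * hh
    | linear_combination hh / 3
    | linear_combination -hh / 3
    | linear_combination hh / 4
    | linear_combination -hh / 4
  have D2 : D hV 2 = D eV 0 + D fV 1 := by
    have hh := congrFun ID 2
    simp at hh
    first
    | exact hh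
    | exact hh.symm
    | linear_combination hh
    | linear_combination -hh
    | linear_combination hh / 2
    | linear_combination -hh / 2
    | linear_combination 2 * hh
    | linear_combination -2 * hh
    | linear_combination hh / 3
    | linear_combination -hh / 3
    | linear_combination hh / 4
    | linear_combination -hh / 4
  have D5 : D hV 5 = 0 := by
    have hh := congrFun ID 5
    simp at hh
    first
    | exact hh
    | exact hh.symm
    | linear_combination hh
    | linear_combination -hh
    | linear_combination hh / 2
    | linear_combination -hh / 2
    | linear_combination 2 * hh
    | linear_combination -2 * hh
    | linear_combination hh / 3
    | linear_combination -hh / 3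
    | linear_combination hh / 4
    | linear_combination -hh / 4
  have E0 : D pV 0 = 0 := by
    have hh := congrFun IE 0
    simp at hh
    first
    | exact hh
    | exact hh.symm
    | linear_combination hh
    | linear_combination -hh
    | linear_combination hh / 2
    | linear_combination -hh / 2
    | linear_combination 2 * hh
    | linear_combination -2 * hh
    | linear_combination hh / 3
    | linear_combination -hh / 3
    | linear_combination hh / 4
    | linear_combination -hh / 4
  have E1 : D pV 1 = 0 := by
    have hh := congrFun IE 1
    simp at hh
    first
    | exact hh
    | exact hh.symm
    | linear_combination hh
    | linear_combination -hh
    | linear_combination hh / 2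
    | linear_combination -hh / 2
    | linear_combination 2 * hh
    | linear_combination -2 * hh
    | linear_combination hh / 3
    | linear_combination -hh / 3
    | linear_combination hh / 4
    | linear_combination -hh / 4
  have E2 : D pV 2 = 0 := by
    have hh := congrFun IE 2
    simp at hh
    first
    | exact hh
    | exact hh.symm
    | linear_combination hh
    | linear_combination -hh
    | linear_combination hh / 2
    | linear_combination -hh / 2
    | linear_combination 2 * hh
    | linear_combination -2 * hh
    | linear_combination hh / 3
    | linear_combination -hh / 3
    | linear_combination hh / 4
    | linear_combination -hh / 4
  have E4 : 2 * D pV 4 = D hV 1 := by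
    have hh := congrFun IE 4
    simp at hh
    first
    | exact hh
    | exact hh.symm
    | linear_combination hh
    | linear_combination -hh
    | linear_combination hh / 2
    | linear_combination -hh / 2
    | linear_combination 2 * hh
    | linear_combination -2 * hh
    | linear_combination hh / 3
    | linear_combination -hh / 3
    | linear_combination hh / 4
    | linear_combination -hh / 4
  have E5 : D pV 5 = -(D hV 4) := by
    have hh := congrFun IE 5
    simp at hh
    first
    | exact hh
    | exact hh.symm
    | linear_combination hh
    | linear_combination -hh
    | linear_combination hh / 2
    | linear_combination -hh / 2
    | linear_combination 2 * hh
    | linear_combination -2 * hh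
    | linear_combination hh / 3
    | linear_combination -hh / 3
    | linear_combination hh / 4
    | linear_combination -hh / 4
  have F0 : D qV 0 = 0 := by
    have hh := congrFun IF 0
    simp at hh
    first
    | exact hh
    | exact hh.symm
    | linear_combination hh
    | linear_combination -hh
    | linear_combination hh / 2
    | linear_combination -hh / 2
    | linear_combination 2 * hh
    | linear_combination -2 * hh
    | linear_combination hh / 3
    | linear_combination -hh / 3
    | linear_combination hh / 4
    | linear_combination -hh / 4
  have F1 : D qV 1 = 0 := by
    have hh := congrFun IF 1
    simp at hh
    first
    | exact hh
    | exact hh.symm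
    | linear_combination hh
    | linear_combination -hh
    | linear_combination hh / 2
    | linear_combination -hh / 2
    | linear_combination 2 * hh
    | linear_combination -2 * hh
    | linear_combination hh / 3
    | linear_combination -hh / 3
    | linear_combination hh / 4
    | linear_combination -hh / 4
  have F2 : D qV 2 = 0 := by
    have hh := congrFun IF 2
    simp at hh
    first
    | exact hh
    | exact hh.symm
    | linear_combination hh
    | linear_combination -hh
    | linear_combination hh / 2
    | linear_combination -hh / 2
    | linear_combination 2 * hh
    | linear_combination -2 * hh
    | linear_combination hh / 3
    | linear_combination -hh / 3
    | linear_combination hh / 4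
    | linear_combination -hh / 4
  have F3 : 2 * D qV 3 = -(D hV 0) := by
    have hh := congrFun IF 3
    simp at hh
    first
    | exact hh
    | exact hh.symm
    | linear_combination hh
    | linear_combination -hh
    | linear_combination hh / 2
    | linear_combination -hh / 2
    | linear_combination 2 * hh
    | linear_combination -2 * hh
    | linear_combination hh / 3
    | linear_combination -hh / 3
    | linear_combination hh / 4
    | linear_combination -hh / 4
  have F5 : D qV 5 = -(D hV 3) := by
    have hh := congrFun IF 5
    simp at hh
    first
    | exact hh
    | exact hh.symm
    | linear_combination hh
    | linear_combination -hh
    | linear_combination hh / 2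
    | linear_combination -hh / 2
    | linear_combination 2 * hh
    | linear_combination -2 * hh
    | linear_combination hh / 3
    | linear_combination -hh / 3
    | linear_combination hh / 4
    | linear_combination -hh / 4
  have G0 : D eV 0 = 2 * D EV 6 := by
    have hh := congrFun IG 0
    simp at hh
    first
    | exact hh
    | exact hh.symm
    | linear_combination hh
    | linear_combination -hh
    | linear_combination hh / 2
    | linear_combination -hh / 2
    | linear_combination 2 * hh
    | linear_combination -2 * hh
    | linear_combination hh / 3
    | linear_combination -hh / 3
    | linear_combination hh / 4
    | linear_combination -hh / 4
  have G2 : D eV 2 = -(D EV 7) := by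
    have hh := congrFun IG 2
    simp at hh
    first
    | exact hh
    | exact hh.symm
    | linear_combination hh
    | linear_combination -hh
    | linear_combination hh / 2
    | linear_combination -hh / 2
    | linear_combination 2 * hh
    | linear_combination -2 * hh
    | linear_combination hh / 3
    | linear_combination -hh / 3
    | linear_combination hh / 4
    | linear_combination -hh / 4
  have G3 : D eV 3 = -(D EV 8) := by
    have hh := congrFun IG 3
    simp at hh
    first
    | exact hh
    | exact hh.symm
    | linear_combination hh
    | linear_combination -hh
    | linear_combination hh / 2
    | linear_combination -hh / 2
    | linear_combination 2 * hh
    | linear_combination -2 * hh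
    | linear_combination hh / 3
    | linear_combination -hh / 3
    | linear_combination hh / 4
    | linear_combination -hh / 4
  have H1 : D fV 1 = 2 * D FV 7 := by
    have hh := congrFun IH 1
    simp at hh
    first
    | exact hh
    | exact hh.symm
    | linear_combination hh
    | linear_combination -hh
    | linear_combination hh / 2
    | linear_combination -hh / 2
    | linear_combination 2 * hh
    | linear_combination -2 * hh
    | linear_combination hh / 3
    | linear_combination -hh / 3
    | linear_combination hh / 4
    | linear_combination -hh / 4
  have H2 : D fV 2 = D FV 6 := by
    have hh := congrFun IH 2
    simp at hh
    first
    | exact hh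
    | exact hh.symm
    | linear_combination hh
    | linear_combination -hh
    | linear_combination hh / 2
    | linear_combination -hh / 2
    | linear_combination 2 * hh
    | linear_combination -2 * hh
    | linear_combination hh / 3
    | linear_combination -hh / 3
    | linear_combination hh / 4
    | linear_combination -hh / 4
  have H4 : D fV 4 = -(D FV 8) := by
    have hh := congrFun IH 4
    simp at hh
    first
    | exact hh
    | exact hh.symm
    | linear_combination hh
    | linear_combination -hh
    | linear_combination hh / 2
    | linear_combination -hh / 2
    | linear_combination 2 * hh
    | linear_combination -2 * hh
    | linear_combination hh / 3
    | linear_combination -hh / 3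
    | linear_combination hh / 4
    | linear_combination -hh / 4
  have I3 : D hV 3 = D FV 8 := by
    have hh := congrFun II 3
    simp at hh
    first
    | exact hh
    | exact hh.symm
    | linear_combination hh
    | linear_combination -hh
    | linear_combination hh / 2
    | linear_combination -hh / 2
    | linear_combination 2 * hh
    | linear_combination -2 * hh
    | linear_combination hh / 3
    | linear_combination -hh / 3
    | linear_combination hh / 4
    | linear_combination -hh / 4
  have J1 : D qV 1 = -(2 * D GV 7) := by
    have hh := congrFun IJ 1
    simp at hh
    first
    | exact hh
    | exact hh.symm
    | linear_combination hh
    | linear_combination -hh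
    | linear_combination hh / 2
    | linear_combination -hh / 2
    | linear_combination 2 * hh
    | linear_combination -2 * hh
    | linear_combination hh / 3
    | linear_combination -hh / 3
    | linear_combination hh / 4
    | linear_combination -hh / 4
  have J2 : D qV 2 = -(D GV 6) := by
    have hh := congrFun IJ 2
    simp at hh
    first
    | exact hh
    | exact hh.symm
    | linear_combination hh
    | linear_combination -hh
    | linear_combination hh / 2
    | linear_combination -hh / 2
    | linear_combination 2 * hh
    | linear_combination -2 * hh
    | linear_combination hh / 3
    | linear_combination -hh / 3
    | linear_combination hh / 4
    | linear_combination -hh / 4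
  have J4 : D qV 4 = D FV 7 + D GV 8 := by
    have hh := congrFun IJ 4
    simp at hh
    first
    | exact hh
    | exact hh.symm
    | linear_combination hh
    | linear_combination -hh
    | linear_combination hh / 2
    | linear_combination -hh / 2
    | linear_combination 2 * hh
    | linear_combination -2 * hh
    | linear_combination hh / 3
    | linear_combination -hh / 3
    | linear_combination hh / 4
    | linear_combination -hh / 4
  have J5 : D qV 5 = D FV 8 := by
    have hh := congrFun IJ 5
    simp at hh
    first
    | exact hh
    | exact hh.symm
    | linear_combination hh
    | linear_combination -hh
    | linear_combination hh / 2
    | linear_combination -hh / 2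
    | linear_combination 2 * hh
    | linear_combination -2 * hh
    | linear_combination hh / 3
    | linear_combination -hh / 3
    | linear_combination hh / 4
    | linear_combination -hh / 4
  have K3 : D pV 3 = D EV 6 + D GV 8 := by
    have hh := congrFun IK 3
    simp at hh
    first
    | exact hh
    | exact hh.symm
    | linear_combination hh
    | linear_combination -hh
    | linear_combination hh / 2
    | linear_combination -hh / 2
    | linear_combination 2 * hh
    | linear_combination -2 * hh
    | linear_combination hh / 3
    | linear_combination -hh / 3
    | linear_combination hh / 4
    | linear_combination -hh / 4
  have hvh4 : D hV 4 = 0 := by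
    first
    | linear_combination (B3 - A3)/2
    | linear_combination -((B3 - A3)/2)
  have hve3 : D eV 3 = 0 := by
    first
    | linear_combination A3 + hvh4
    | linear_combination -(A3 + hvh4)
  have hve2 : D eV 2 = 0 := by
    first
    | linear_combination (B2 - A2)/2
    | linear_combination -((B2 - A2)/2)
  have hvf2 : D fV 2 = 0 := by
    first
    | linear_combination (C2 - D0f)/2
    | linear_combination -((C2 - D0f)/2)
  have hvh3 : D hV 3 = 0 := by
    first
    | linear_combination (I3 - J5 + F5)/2
    | linear_combination -((I3 - J5 + F5)/2)
  have hvF8 : D FV 8 = 0 := by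
    first
    | linear_combination hvh3 - I3
    | linear_combination -(hvh3 - I3)
  have hvq5 : D qV 5 = 0 := by
    first
    | linear_combination F5 - hvh3
    | linear_combination -(F5 - hvh3)
  have hvf4 : D fV 4 = 0 := by
    first
    | linear_combination C4 + hvh3
    | linear_combination -(C4 + hvh3)
  have hvq3 : D qV 3 = 0 := by
    first
    | linear_combination (F3 - D0f)/2
    | linear_combination -((F3 - D0f)/2)
  have hvf1 : D fV 1 = -(2 * D EV 6) := by
    first
    | linear_combination B0 - D2 - G0
    | linear_combination -(B0 - D2 - G0)
  have hvF7 : D FV 7 = -(D EV 6) := by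
    first
    | linear_combination (hvf1 - H1)/2
    | linear_combination -((hvf1 - H1)/2)
  have hvF6 : D FV 6 = 0 := by
    first
    | linear_combination hvf2 - H2
    | linear_combination -(hvf2 - H2)
  have hvE7 : D EV 7 = 0 := by
    first
    | linear_combination G2 - hve2
    | linear_combination -(G2 - hve2)
  have hvE8 : D EV 8 = 0 := by
    first
    | linear_combination G3 - hve3
    | linear_combination -(G3 - hve3)
  have hvG7 : D GV 7 = 0 := by
    first
    | linear_combination (J1 - F1)/2
    | linear_combination -((J1 - F1)/2)
  have hvG6 : D GV 6 = 0 := by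
    first
    | linear_combination J2 - F2
    | linear_combination -(J2 - F2)
  have hvq4 : D qV 4 = D GV 8 - D EV 6 := by
    first
    | linear_combination J4 + hvF7
    | linear_combination -(J4 + hvF7)
  have hvp4 : D pV 4 = 0 := by
    first
    | linear_combination (E4 + A2)/2
    | linear_combination -((E4 + A2)/2)
  have hvp5 : D pV 5 = 0 := by
    first
    | linear_combination E5 - hvh4
    | linear_combination -(E5 - hvh4)
  refine ⟨D EV 6, D GV 8, ?_, ?_, ?_, ?_, ?_, ?_, ?_⟩
  · exact SS_ext9 (by simpa using G0) (by simpa using A1) (by simpa using hve2)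
      (by simpa using hve3) (by simpa using A4) (by simpa using B5)
      (by simpa using pe6) (by simpa using pe7) (by simpa using pe8)
  · exact SS_ext9 (by simpa using C0) (by simpa using hvf1) (by simpa using hvf2)
      (by simpa using C3) (by simpa using hvf4) (by simpa using C5)
      (by simpa using pf6) (by simpa using pf7) (by simpa using pf8)
  · exact SS_ext9 (by simpa using E0) (by simpa using E1) (by simpa using E2)
      (by simpa using K3) (by simpa using hvp4) (by simpa using hvp5)
      (by simpa using pp6) (by simpa using pp7) (by simpa using pp8)
  · exact SS_ext9 (by simpa using F0) (by simpa using F1) (by simpa using F2)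
      (by simpa using hvq3) (by simpa using hvq4) (by simpa using hvq5)
      (by simpa using pq6) (by simpa using pq7) (by simpa using pq8)
  · exact SS_ext9 (by simpa using PE0) (by simpa using PE1) (by simpa using PE2)
      (by simpa using PE3) (by simpa using PE4) (by simpa using PE5)
      (by simp) (by simpa using hvE7) (by simpa using hvE8)
  · exact SS_ext9 (by simpa using PF0) (by simpa using PF1) (by simpa using PF2)
      (by simpa using PF3) (by simpa using PF4) (by simpa using PF5)
      (by simpa using hvF6) (by simpa using hvF7) (by simpa using hvF8)
  · exact SS_ext9 (by simpa using PG0) (by simpa using PG1) (by simpa using PG2)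
      (by simpa using PG3) (by simpa using PG4) (by simpa using PG5)
      (by simpa using hvG6) (by simpa using hvG7) (by simp)

lemma superDer1_vals {D : SS → SS} (hD : IsSuperDer1 D) :
    ∃ s : ℂ, D eV = 0 ∧ D fV = 0 ∧ D pV = 0 ∧ D qV = 0 ∧
      D EV = (-s) • pV ∧ D FV = s • qV ∧ D GV = s • zV := by
  obtain ⟨hlin, hS01, hS10, hLe, hLo⟩ := hD
  obtain ⟨qe0, qe1, qe2, qe3, qe4, qe5⟩ := memS1_coords (hS01 eV eV_S0)
  obtain ⟨qf0, qf1, qf2, qf3, qf4, qf5⟩ := memS1_coords (hS01 fV fV_S0)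
  obtain ⟨qp0, qp1, qp2, qp3, qp4, qp5⟩ := memS1_coords (hS01 pV pV_S0)
  obtain ⟨qq0, qq1, qq2, qq3, qq4, qq5⟩ := memS1_coords (hS01 qV qV_S0)
  obtain ⟨QE6, QE7, QE8⟩ := memS0_coords (hS10 EV EV_S1)
  obtain ⟨QF6, QF7, QF8⟩ := memS0_coords (hS10 FV FV_S1)
  obtain ⟨QG6, QG7, QG8⟩ := memS0_coords (hS10 GV GV_S1)
  have JA := hLe eV hV eV_S0 (Or.inl hV_S0)
  rw [bEH, hlin.map_zero] at JA
  have JB := hLe hV eV hV_S0 (Or.inl eV_S0)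
  rw [bHE, hlin.map_smul] at JB
  have JC := hLe hV fV hV_S0 (Or.inl fV_S0)
  rw [bHF, hlin.map_smul] at JC
  have JD := hLe eV fV eV_S0 (Or.inl fV_S0)
  rw [bEF] at JD
  have JE := hLo EV EV EV_S1 (Or.inr EV_S1)
  rw [bEE, hlin.map_smul] at JE
  have JF := hLe hV EV hV_S0 (Or.inr EV_S1)
  rw [bHEo] at JF
  have JG := hLo EV hV EV_S1 (Or.inl hV_S0)
  rw [bEHo, hlin.map_neg] at JG
  have JH := hLe hV FV hV_S0 (Or.inr FV_S1)
  rw [bHFo, hlin.map_neg] at JH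
  have JI := hLo EV FV EV_S1 (Or.inr FV_S1)
  rw [bEFm, hlin.map_neg] at JI
  have JJ := hLe hV GV hV_S0 (Or.inr GV_S1)
  rw [bHG, hlin.map_zero] at JJ
  have JK := hLe qV EV qV_S0 (Or.inr EV_S1)
  rw [bQE] at JK
  have JL := hLe eV qV eV_S0 (Or.inl qV_S0)
  rw [bEQ] at JL
  have JM := hLe hV pV hV_S0 (Or.inl pV_S0)
  rw [bHP] at JM
  have JN := hLe pV qV pV_S0 (Or.inl qV_S0)
  rw [bPQ] at JN
  have JO := hLo GV GV GV_S1 (Or.inr GV_S1)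
  rw [bGG] at JO
  have A'6 : D eV 6 = -(D hV 7) := by
    have hh := congrFun JA 6
    simp at hh
    first
    | exact hh
    | exact hh.symm
    | linear_combination hh
    | linear_combination -hh
    | linear_combination hh / 2
    | linear_combination -hh / 2
    | linear_combination 2 * hh
    | linear_combination -2 * hh
    | linear_combination hh / 3
    | linear_combination -hh / 3
    | linear_combination hh / 4
    | linear_combination -hh / 4
  have A'7 : D eV 7 = 0 := by
    have hh := congrFun JA 7
    simp at hh
    first
    | exact hh
    | exact hh.symm
    | linear_combination hh
    | linear_combination -hh
    | linear_combination hh / 2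
    | linear_combination -hh / 2
    | linear_combination 2 * hh
    | linear_combination -2 * hh
    | linear_combination hh / 3
    | linear_combination -hh / 3
    | linear_combination hh / 4
    | linear_combination -hh / 4
  have B'6 : D eV 6 = D hV 7 := by
    have hh := congrFun JB 6
    simp at hh
    first
    | exact hh
    | exact hh.symm
    | linear_combination hh
    | linear_combination -hh
    | linear_combination hh / 2
    | linear_combination -hh / 2
    | linear_combination 2 * hh
    | linear_combination -2 * hh
    | linear_combination hh / 3
    | linear_combination -hh / 3
    | linear_combination hh / 4
    | linear_combination -hh / 4
  have B'8 : D eV 8 = 0 := by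
    have hh := congrFun JB 8
    simp at hh
    first
    | exact hh
    | exact hh.symm
    | linear_combination hh
    | linear_combination -hh
    | linear_combination hh / 2
    | linear_combination -hh / 2
    | linear_combination 2 * hh
    | linear_combination -2 * hh
    | linear_combination hh / 3
    | linear_combination -hh / 3
    | linear_combination hh / 4
    | linear_combination -hh / 4
  have C'6 : D fV 6 = 0 := by
    have hh := congrFun JC 6
    simp at hh
    first
    | exact hh
    | exact hh.symm
    | linear_combination hh
    | linear_combination -hh
    | linear_combination hh / 2
    | linear_combination -hh / 2
    | linear_combination 2 * hh
    | linear_combination -2 * hh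
    | linear_combination hh / 3
    | linear_combination -hh / 3
    | linear_combination hh / 4
    | linear_combination -hh / 4
  have C'7 : D fV 7 = -(D hV 6) := by
    have hh := congrFun JC 7
    simp at hh
    first
    | exact hh
    | exact hh.symm
    | linear_combination hh
    | linear_combination -hh
    | linear_combination hh / 2
    | linear_combination -hh / 2
    | linear_combination 2 * hh
    | linear_combination -2 * hh
    | linear_combination hh / 3
    | linear_combination -hh / 3
    | linear_combination hh / 4
    | linear_combination -hh / 4
  have C'8 : D fV 8 = 0 := by
    have hh := congrFun JC 8
    simp at hh
    first
    | exact hh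
    | exact hh.symm
    | linear_combination hh
    | linear_combination -hh
    | linear_combination hh / 2
    | linear_combination -hh / 2
    | linear_combination 2 * hh
    | linear_combination -2 * hh
    | linear_combination hh / 3
    | linear_combination -hh / 3
    | linear_combination hh / 4
    | linear_combination -hh / 4
  have D'8 : D hV 8 = 0 := by
    have hh := congrFun JD 8
    simp at hh
    first
    | exact hh
    | exact hh.symm
    | linear_combination hh
    | linear_combination -hh
    | linear_combination hh / 2
    | linear_combination -hh / 2
    | linear_combination 2 * hh
    | linear_combination -2 * hh
    | linear_combination hh / 3
    | linear_combination -hh / 3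
    | linear_combination hh / 4
    | linear_combination -hh / 4
  have F'0 : D EV 0 = -(2 * D hV 6) := by
    have hh := congrFun JF 0
    simp at hh
    first
    | exact hh
    | exact hh.symm
    | linear_combination hh
    | linear_combination -hh
    | linear_combination hh / 2
    | linear_combination -hh / 2
    | linear_combination 2 * hh
    | linear_combination -2 * hh
    | linear_combination hh / 3
    | linear_combination -hh / 3
    | linear_combination hh / 4
    | linear_combination -hh / 4
  have F'1 : D EV 1 = 0 := by
    have hh := congrFun JF 1
    simp at hh
    first
    | exact hh
    | exact hh.symm
    | linear_combination hh
    | linear_combination -hh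
    | linear_combination hh / 2
    | linear_combination -hh / 2
    | linear_combination 2 * hh
    | linear_combination -2 * hh
    | linear_combination hh / 3
    | linear_combination -hh / 3
    | linear_combination hh / 4
    | linear_combination -hh / 4
  have F'2 : D EV 2 = -(D hV 7) := by
    have hh := congrFun JF 2
    simp at hh
    first
    | exact hh
    | exact hh.symm
    | linear_combination hh
    | linear_combination -hh
    | linear_combination hh / 2
    | linear_combination -hh / 2
    | linear_combination 2 * hh
    | linear_combination -2 * hh
    | linear_combination hh / 3
    | linear_combination -hh / 3
    | linear_combination hh / 4
    | linear_combination -hh / 4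
  have F'4 : D EV 4 = 0 := by
    have hh := congrFun JF 4
    simp at hh
    first
    | exact hh
    | exact hh.symm
    | linear_combination hh
    | linear_combination -hh
    | linear_combination hh / 2
    | linear_combination -hh / 2
    | linear_combination 2 * hh
    | linear_combination -2 * hh
    | linear_combination hh / 3
    | linear_combination -hh / 3
    | linear_combination hh / 4
    | linear_combination -hh / 4
  have F'5 : D EV 5 = 0 := by
    have hh := congrFun JF 5
    simp at hh
    first
    | exact hh
    | exact hh.symm
    | linear_combination hh
    | linear_combination -hh
    | linear_combination hh / 2
    | linear_combination -hh / 2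
    | linear_combination 2 * hh
    | linear_combination -2 * hh
    | linear_combination hh / 3
    | linear_combination -hh / 3
    | linear_combination hh / 4
    | linear_combination -hh / 4
  have G'0 : D EV 0 = 2 * D hV 6 := by
    have hh := congrFun JG 0
    simp at hh
    first
    | exact hh
    | exact hh.symm
    | linear_combination hh
    | linear_combination -hh
    | linear_combination hh / 2
    | linear_combination -hh / 2
    | linear_combination 2 * hh
    | linear_combination -2 * hh
    | linear_combination hh / 3
    | linear_combination -hh / 3
    | linear_combination hh / 4
    | linear_combination -hh / 4
  have H'0 : D FV 0 = 0 := by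
    have hh := congrFun JH 0
    simp at hh
    first
    | exact hh
    | exact hh.symm
    | linear_combination hh
    | linear_combination -hh
    | linear_combination hh / 2
    | linear_combination -hh / 2
    | linear_combination 2 * hh
    | linear_combination -2 * hh
    | linear_combination hh / 3
    | linear_combination -hh / 3
    | linear_combination hh / 4
    | linear_combination -hh / 4
  have H'1 : D FV 1 = -(2 * D hV 7) := by
    have hh := congrFun JH 1
    simp at hh
    first
    | exact hh
    | exact hh.symm
    | linear_combination hh
    | linear_combination -hh
    | linear_combination hh / 2
    | linear_combination -hh / 2
    | linear_combination 2 * hh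
    | linear_combination -2 * hh
    | linear_combination hh / 3
    | linear_combination -hh / 3
    | linear_combination hh / 4
    | linear_combination -hh / 4
  have H'2 : D FV 2 = D hV 6 := by
    have hh := congrFun JH 2
    simp at hh
    first
    | exact hh
    | exact hh.symm
    | linear_combination hh
    | linear_combination -hh
    | linear_combination hh / 2
    | linear_combination -hh / 2
    | linear_combination 2 * hh
    | linear_combination -2 * hh
    | linear_combination hh / 3
    | linear_combination -hh / 3
    | linear_combination hh / 4
    | linear_combination -hh / 4
  have H'3 : D FV 3 = 0 := by
    have hh := congrFun JH 3
    simp at hh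
    first
    | exact hh
    | exact hh.symm
    | linear_combination hh
    | linear_combination -hh
    | linear_combination hh / 2
    | linear_combination -hh / 2
    | linear_combination 2 * hh
    | linear_combination -2 * hh
    | linear_combination hh / 3
    | linear_combination -hh / 3
    | linear_combination hh / 4
    | linear_combination -hh / 4
  have H'5 : D FV 5 = 0 := by
    have hh := congrFun JH 5
    simp at hh
    first
    | exact hh
    | exact hh.symm
    | linear_combination hh
    | linear_combination -hh
    | linear_combination hh / 2
    | linear_combination -hh / 2
    | linear_combination 2 * hh
    | linear_combination -2 * hh
    | linear_combination hh / 3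
    | linear_combination -hh / 3
    | linear_combination hh / 4
    | linear_combination -hh / 4
  have I'8 : D FV 4 = -(D EV 3) - D hV 8 := by
    have hh := congrFun JI 8
    simp at hh
    first
    | exact hh
    | exact hh.symm
    | linear_combination hh
    | linear_combination -hh
    | linear_combination hh / 2
    | linear_combination -hh / 2
    | linear_combination 2 * hh
    | linear_combination -2 * hh
    | linear_combination hh / 3
    | linear_combination -hh / 3
    | linear_combination hh / 4
    | linear_combination -hh / 4
  have J'0 : D GV 0 = 0 := by
    have hh := congrFun JJ 0
    simp at hh
    first
    | exact hh
    | exact hh.symm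
    | linear_combination hh
    | linear_combination -hh
    | linear_combination hh / 2
    | linear_combination -hh / 2
    | linear_combination 2 * hh
    | linear_combination -2 * hh
    | linear_combination hh / 3
    | linear_combination -hh / 3
    | linear_combination hh / 4
    | linear_combination -hh / 4
  have J'1 : D GV 1 = 0 := by
    have hh := congrFun JJ 1
    simp at hh
    first
    | exact hh
    | exact hh.symm
    | linear_combination hh
    | linear_combination -hh
    | linear_combination hh / 2
    | linear_combination -hh / 2
    | linear_combination 2 * hh
    | linear_combination -2 * hh
    | linear_combination hh / 3
    | linear_combination -hh / 3
    | linear_combination hh / 4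
    | linear_combination -hh / 4
  have J'3 : D GV 3 = D hV 6 := by
    have hh := congrFun JJ 3
    simp at hh
    first
    | exact hh
    | exact hh.symm
    | linear_combination hh
    | linear_combination -hh
    | linear_combination hh / 2
    | linear_combination -hh / 2
    | linear_combination 2 * hh
    | linear_combination -2 * hh
    | linear_combination hh / 3
    | linear_combination -hh / 3
    | linear_combination hh / 4
    | linear_combination -hh / 4
  have J'4 : D GV 4 = D hV 7 := by
    have hh := congrFun JJ 4
    simp at hh
    first
    | exact hh
    | exact hh.symm
    | linear_combination hh
    | linear_combination -hh
    | linear_combination hh / 2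
    | linear_combination -hh / 2
    | linear_combination 2 * hh
    | linear_combination -2 * hh
    | linear_combination hh / 3
    | linear_combination -hh / 3
    | linear_combination hh / 4
    | linear_combination -hh / 4
  have K'0 : D GV 0 = 2 * D qV 6 := by
    have hh := congrFun JK 0
    simp at hh
    first
    | exact hh
    | exact hh.symm
    | linear_combination hh
    | linear_combination -hh
    | linear_combination hh / 2
    | linear_combination -hh / 2
    | linear_combination 2 * hh
    | linear_combination -2 * hh
    | linear_combination hh / 3
    | linear_combination -hh / 3
    | linear_combination hh / 4
    | linear_combination -hh / 4
  have K'2 : D GV 2 = -(D qV 7) := by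
    have hh := congrFun JK 2
    simp at hh
    first
    | exact hh
    | exact hh.symm
    | linear_combination hh
    | linear_combination -hh
    | linear_combination hh / 2
    | linear_combination -hh / 2
    | linear_combination 2 * hh
    | linear_combination -2 * hh
    | linear_combination hh / 3
    | linear_combination -hh / 3
    | linear_combination hh / 4
    | linear_combination -hh / 4
  have K'3 : D GV 3 = -(D qV 8) - D EV 0 := by
    have hh := congrFun JK 3
    simp at hh
    first
    | exact hh
    | exact hh.symm
    | linear_combination hh
    | linear_combination -hh
    | linear_combination hh / 2
    | linear_combination -hh / 2
    | linear_combination 2 * hh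
    | linear_combination -2 * hh
    | linear_combination hh / 3
    | linear_combination -hh / 3
    | linear_combination hh / 4
    | linear_combination -hh / 4
  have K'5 : D GV 5 = -(D EV 3) := by
    have hh := congrFun JK 5
    simp at hh
    first
    | exact hh
    | exact hh.symm
    | linear_combination hh
    | linear_combination -hh
    | linear_combination hh / 2
    | linear_combination -hh / 2
    | linear_combination 2 * hh
    | linear_combination -2 * hh
    | linear_combination hh / 3
    | linear_combination -hh / 3
    | linear_combination hh / 4
    | linear_combination -hh / 4
  have L'6 : D pV 6 = -(D qV 7) := by
    have hh := congrFun JL 6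
    simp at hh
    first
    | exact hh
    | exact hh.symm
    | linear_combination hh
    | linear_combination -hh
    | linear_combination hh / 2
    | linear_combination -hh / 2
    | linear_combination 2 * hh
    | linear_combination -2 * hh
    | linear_combination hh / 3
    | linear_combination -hh / 3
    | linear_combination hh / 4
    | linear_combination -hh / 4
  have M'7 : D pV 7 = 0 := by
    have hh := congrFun JM 7
    simp at hh
    first
    | exact hh
    | exact hh.symm
    | linear_combination hh
    | linear_combination -hh
    | linear_combination hh / 2
    | linear_combination -hh / 2
    | linear_combination 2 * hh
    | linear_combination -2 * hh
    | linear_combination hh / 3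
    | linear_combination -hh / 3
    | linear_combination hh / 4
    | linear_combination -hh / 4
  have M'8 : D pV 8 = -(D hV 7) := by
    have hh := congrFun JM 8
    simp at hh
    first
    | exact hh
    | exact hh.symm
    | linear_combination hh
    | linear_combination -hh
    | linear_combination hh / 2
    | linear_combination -hh / 2
    | linear_combination 2 * hh
    | linear_combination -2 * hh
    | linear_combination hh / 3
    | linear_combination -hh / 3
    | linear_combination hh / 4
    | linear_combination -hh / 4
  have N'8 : D zV 8 = -(D pV 6) + D qV 7 := by
    have hh := congrFun JN 8
    simp at hh
    first
    | exact hh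
    | exact hh.symm
    | linear_combination hh
    | linear_combination -hh
    | linear_combination hh / 2
    | linear_combination -hh / 2
    | linear_combination 2 * hh
    | linear_combination -2 * hh
    | linear_combination hh / 3
    | linear_combination -hh / 3
    | linear_combination hh / 4
    | linear_combination -hh / 4
  have O'8 : D zV 8 = 0 := by
    have hh := congrFun JO 8
    simp at hh
    first
    | exact hh
    | exact hh.symm
    | linear_combination hh
    | linear_combination -hh
    | linear_combination hh / 2
    | linear_combination -hh / 2
    | linear_combination 2 * hh
    | linear_combination -2 * hh
    | linear_combination hh / 3
    | linear_combination -hh / 3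
    | linear_combination hh / 4
    | linear_combination -hh / 4
  have hwe6 : D eV 6 = 0 := by
    first
    | linear_combination (A'6 + B'6)/2
    | linear_combination -((A'6 + B'6)/2)
  have hwh7 : D hV 7 = 0 := by
    first
    | linear_combination hwe6 - B'6
    | linear_combination -(hwe6 - B'6)
  have hwh6 : D hV 6 = 0 := by
    first
    | linear_combination (F'0 - G'0)/4
    | linear_combination -((F'0 - G'0)/4)
  have hwE0 : D EV 0 = 0 := by
    first
    | linear_combination G'0 + 2*hwh6
    | linear_combination -(G'0 + 2*hwh6)
  have hwf7 : D fV 7 = 0 := by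
    first
    | linear_combination C'7 - hwh6
    | linear_combination -(C'7 - hwh6)
  have hwE2 : D EV 2 = 0 := by
    first
    | linear_combination F'2 - hwh7
    | linear_combination -(F'2 - hwh7)
  have hwF1 : D FV 1 = 0 := by
    first
    | linear_combination H'1 - 2*hwh7
    | linear_combination -(H'1 - 2*hwh7)
  have hwF2 : D FV 2 = 0 := by
    first
    | linear_combination H'2 + hwh6
    | linear_combination -(H'2 + hwh6)
  have hwF4 : D FV 4 = -(D EV 3) := by
    first
    | linear_combination I'8 - D'8
    | linear_combination -(I'8 - D'8)
  have hwG3 : D GV 3 = 0 := by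
    first
    | linear_combination J'3 + hwh6
    | linear_combination -(J'3 + hwh6)
  have hwG4 : D GV 4 = 0 := by
    first
    | linear_combination J'4 + hwh7
    | linear_combination -(J'4 + hwh7)
  have hwq6 : D qV 6 = 0 := by
    first
    | linear_combination (J'0 - K'0)/2
    | linear_combination -((J'0 - K'0)/2)
  have hwq7 : D qV 7 = 0 := by
    first
    | linear_combination (O'8 + L'6 - N'8)/2
    | linear_combination -((O'8 + L'6 - N'8)/2)
  have hwq8 : D qV 8 = 0 := by
    first
    | linear_combination K'3 - hwG3 - hwE0
    | linear_combination -(K'3 - hwG3 - hwE0)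
  have hwp6 : D pV 6 = 0 := by
    first
    | linear_combination L'6 - hwq7
    | linear_combination -(L'6 - hwq7)
  have hwp8 : D pV 8 = 0 := by
    first
    | linear_combination M'8 - hwh7
    | linear_combination -(M'8 - hwh7)
  have hwG2 : D GV 2 = 0 := by
    first
    | linear_combination K'2 - hwq7
    | linear_combination -(K'2 - hwq7)
  refine ⟨-(D EV 3), ?_, ?_, ?_, ?_, ?_, ?_, ?_⟩
  · exact SS_ext9 (by simpa using qe0) (by simpa using qe1) (by simpa using qe2)
      (by simpa using qe3) (by simpa using qe4) (by simpa using qe5)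
      (by simpa using hwe6) (by simpa using A'7) (by simpa using B'8)
  · exact SS_ext9 (by simpa using qf0) (by simpa using qf1) (by simpa using qf2)
      (by simpa using qf3) (by simpa using qf4) (by simpa using qf5)
      (by simpa using C'6) (by simpa using hwf7) (by simpa using C'8)
  · exact SS_ext9 (by simpa using qp0) (by simpa using qp1) (by simpa using qp2)
      (by simpa using qp3) (by simpa using qp4) (by simpa using qp5)
      (by simpa using hwp6) (by simpa using M'7) (by simpa using hwp8)
  · exact SS_ext9 (by simpa using qq0) (by simpa using qq1) (by simpa using qq2)
      (by simpa using qq3) (by simpa using qq4) (by simpa using qq5)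
      (by simpa using hwq6) (by simpa using hwq7) (by simpa using hwq8)
  · exact SS_ext9 (by simpa using hwE0) (by simpa using F'1) (by simpa using hwE2)
      (by simp) (by simpa using F'4) (by simpa using F'5)
      (by simpa using QE6) (by simpa using QE7) (by simpa using QE8)
  · exact SS_ext9 (by simpa using H'0) (by simpa using hwF1) (by simpa using hwF2)
      (by simpa using H'3) (by simpa using hwF4) (by simpa using H'5)
      (by simpa using QF6) (by simpa using QF7) (by simpa using QF8)
  · exact SS_ext9 (by simpa using J'0) (by simpa using J'1) (by simpa using hwG2)
      (by simpa using hwG3) (by simpa using hwG4) (by simpa using K'5)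
      (by simpa using QG6) (by simpa using QG7) (by simpa using QG8)

lemma superDer_form {D : SS → SS} (hD : IsSuperDer D) :
    (∀ x y : SS, D (x + y) = D x + D y) ∧
    ∃ lam t s : ℂ, D eV = (2*lam) • eV ∧ D fV = (-(2*lam)) • fV ∧
      D pV = (lam + t) • pV ∧ D qV = (t - lam) • qV ∧
      D EV = (-s) • pV + lam • EV ∧ D FV = s • qV + (-lam) • FV ∧
      D GV = s • zV + t • GV := by
  obtain ⟨D0, D1, h0, h1, hsum⟩ := hD
  obtain ⟨lam, t, e0, f0, p0, q0, E0, F0, G0⟩ := superDer0_vals h0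
  obtain ⟨s, e1, f1, p1, q1, E1, F1, G1⟩ := superDer1_vals h1
  constructor
  · intro x y
    simp only [hsum, h0.1.map_add x y, h1.1.map_add x y]
    abel
  refine ⟨lam, t, s, ?_, ?_, ?_, ?_, ?_, ?_, ?_⟩
  · rw [hsum, e0, e1, add_zero]
  · rw [hsum, f0, f1, add_zero]
  · rw [hsum, p0, p1, add_zero]
  · rw [hsum, q0, q1, add_zero]
  · rw [hsum, E0, E1, add_comm]
  · rw [hsum, F0, F1, add_comm]
  · rw [hsum, G0, G1, add_comm]
/-- If `Δ` is a local super-derivation of 𝒮 with `Δ(h+z) = 0`, then there are complex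
numbers α, μ₁, μ₂, c, d, λ with `Δ(e)=2α·e`, `Δ(f)=-2α·f`, `Δ(p)=μ₁·p`, `Δ(q)=μ₂·q`,
`Δ(E)=c·p+α·E`, `Δ(F)=-c·q-α·F`, `Δ(G)=d·z+λ·G`. -/
theorem localDer_forms_pqEFG (Δ : SS → SS) (hΔ : IsLocalSuperDer Δ)
    (hz : Δ (hV + zV) = 0) :
    ∃ (α μ₁ μ₂ c d l : ℂ),
      Δ eV = (2 * α) • eV ∧
      Δ fV = (-(2 * α)) • fV ∧
      Δ pV = μ₁ • pV ∧
      Δ qV = μ₂ • qV ∧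
      Δ EV = c • pV + α • EV ∧
      Δ FV = -(c • qV) - α • FV ∧
      Δ GV = d • zV + l • GV := by
  obtain ⟨hlin, hloc⟩ := hΔ
  obtain ⟨De, hDe, he⟩ := hloc eV
  obtain ⟨-, l1, t1, s1, he1, -, -, -, -, -, -⟩ := superDer_form hDe
  rw [he1] at he
  obtain ⟨Df, hDf, hf⟩ := hloc fV
  obtain ⟨-, l2, t2, s2, -, hf2, -, -, -, -, -⟩ := superDer_form hDf
  rw [hf2] at hf
  obtain ⟨Dp, hDp, hp⟩ := hloc pV
  obtain ⟨-, l3, t3, s3, -, -, hp3, -, -, -, -⟩ := superDer_form hDp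
  rw [hp3] at hp
  obtain ⟨Dq, hDq, hq⟩ := hloc qV
  obtain ⟨-, l4, t4, s4, -, -, -, hq4, -, -, -⟩ := superDer_form hDq
  rw [hq4] at hq
  obtain ⟨DE, hDE, hE⟩ := hloc EV
  obtain ⟨-, l5, t5, s5, -, -, -, -, hE5, -, -⟩ := superDer_form hDE
  rw [hE5] at hE
  obtain ⟨DF, hDF, hF⟩ := hloc FV
  obtain ⟨-, l6, t6, s6, -, -, -, -, -, hF6, -⟩ := superDer_form hDF
  rw [hF6] at hF
  obtain ⟨DG, hDG, hG⟩ := hloc GV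
  obtain ⟨-, l7, t7, s7, -, -, -, -, -, -, hG7⟩ := superDer_form hDG
  rw [hG7] at hG
  -- point e + f
  obtain ⟨D8, hD8, h8⟩ := hloc (eV + fV)
  obtain ⟨hadd8, l8, t8, s8, he8, hf8, -, -, -, -, -⟩ := superDer_form hD8
  have hef : Δ eV + Δ fV = (2*l8) • eV + (-(2*l8)) • fV := by
    rw [← hlin.map_add, h8, hadd8, he8, hf8]
  rw [he, hf] at hef
  have c0 := congrFun hef 0
  have c1 := congrFun hef 1
  simp at c0 c1
  have hl2 : l2 = l1 := by
    first
    | linear_combination c1 - c0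
    | linear_combination c1 + c0
    | linear_combination -c1 + c0
    | linear_combination (c1 - c0)/2
    | linear_combination (c1 + c0)/2
    | linear_combination (-c1 - c0)/2
    | linear_combination (-c1 + c0)/2
  -- point e + E
  obtain ⟨D9, hD9, h9⟩ := hloc (eV + EV)
  obtain ⟨hadd9, l9, t9, s9, he9, -, -, -, hE9, -, -⟩ := superDer_form hD9
  have heE : Δ eV + Δ EV = (2*l9) • eV + ((-s9) • pV + l9 • EV) := by
    rw [← hlin.map_add, h9, hadd9, he9, hE9]
  rw [he, hE] at heE
  have d0 := congrFun heE 0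
  have d6 := congrFun heE 6
  simp at d0 d6
  have hl5 : l5 = l1 := by
    first
    | linear_combination d6 - d0
    | linear_combination d6 + d0
    | linear_combination -d6 + d0
    | linear_combination d6 - d0/2
    | linear_combination d6 + d0/2
    | linear_combination -d6 - d0/2
    | linear_combination -d6 + d0/2
  -- point f + F
  obtain ⟨D10, hD10, h10⟩ := hloc (fV + FV)
  obtain ⟨hadd10, l10, t10, s10, -, hf10, -, -, -, hF10, -⟩ := superDer_form hD10
  have hfF : Δ fV + Δ FV = (-(2*l10)) • fV + (s10 • qV + (-l10) • FV) := by
    rw [← hlin.map_add, h10, hadd10, hf10, hF10]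
  rw [hf, hF] at hfF
  have e1c := congrFun hfF 1
  have e7c := congrFun hfF 7
  simp at e1c e7c
  have hl6 : l6 = l1 := by
    first
    | linear_combination e7c - e1c + hl2
    | linear_combination e7c + e1c + hl2
    | linear_combination -e7c + e1c + hl2
    | linear_combination e7c - e1c - hl2
    | linear_combination e7c - e1c/2 + hl2
    | linear_combination e7c + e1c/2 + hl2
    | linear_combination -e7c - e1c/2 + hl2
    | linear_combination -e7c + e1c/2 + hl2
    | linear_combination e7c - e1c/2 - hl2
    | linear_combination e7c + e1c/2 - hl2
    | linear_combination -e7c - e1c/2 - hl2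
    | linear_combination -e7c + e1c/2 - hl2
  -- point E + F
  obtain ⟨D11, hD11, h11⟩ := hloc (EV + FV)
  obtain ⟨hadd11, l11, t11, s11, -, -, -, -, hE11, hF11, -⟩ := superDer_form hD11
  have hEF : Δ EV + Δ FV = ((-s11) • pV + l11 • EV) + (s11 • qV + (-l11) • FV) := by
    rw [← hlin.map_add, h11, hadd11, hE11, hF11]
  rw [hE, hF] at hEF
  have g3 := congrFun hEF 3
  have g4 := congrFun hEF 4
  simp at g3 g4
  have hs6 : s6 = s5 := by
    first
    | linear_combination g4 - g3
    | linear_combination g4 + g3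
    | linear_combination -g4 - g3
    | linear_combination -g4 + g3
  refine ⟨l1, l3 + t3, t4 - l4, -s5, s7, t7, ?_, ?_, ?_, ?_, ?_, ?_, ?_⟩
  · exact he
  · rw [hf, hl2]
  · exact hp
  · exact hq
  · rw [hE, hl5]
  · rw [hF, hs6, hl6]
    first
    | module
    | simp [neg_smul, sub_eq_add_neg]
    | (funext k; fin_cases k <;> simp <;> ring)
  · exact hG
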